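/- Let P be a finite index set partitioned into nonempty sets 𝔰 and 𝔲 (the indices of the stable and unstable subsystems), let (A_p)_{p∈P} be n×n real matrices and 𝓘 a compact set of n×n real matrices. Suppose there exist symmetric positive definite matrices (Q_p)_{p∈P} and constants λ_p > 0 (p ∈ 𝔰), μ_p > 0 (p ∈ 𝔲), and γ_{(p,q)} ≥ 1 (p,q ∈ P) such that Q_p·A_p + A_pᵀ·Q_p ⪯ −λ_p·Q_p for all p ∈ 𝔰, Q_p·A_p + A_pᵀ·Q_p ⪯ μ_p·Q_p for all p ∈ 𝔲, and Mᵀ·Q_p·M ⪯ γ_{(q,p)}·Q_q for all p, q ∈ P and all M ∈ 𝓘. Set λ = min_{p∈𝔰} λ_p, μ = max_{p∈𝔲} μ_p and γ = max_{p,q∈P} γ_{(p,q)}. Let τ, η > 0, let p : ℕ → P be an infinite switching sequence and d_1, d_2, … positive durations with d_k ≥ τ whenever p_{k−1} ∈ 𝔰 and d_k ≤ η whenever p_{k−1} ∈ 𝔲, and set N_s(j) = #{0 ≤ i < j : p_i ∈ 𝔰} and N_u(j) = #{0 ≤ i < j : p_i ∈ 𝔲}. If limsup_{j→∞} ( −λ·N_s(j)·τ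 + μ·N_u(j)·η + j·ln γ ) < 0, then there exists C > 0 such that for every choice of impulses M_1, M_2, … ∈ 𝓘, every j ≥ 0 and every s with 0 ≤ s ≤ d_{j+1}, one has ‖exp(s·A_{p_j})·Ψ_j‖ ≤ C; that is, the impulsive switched system is stable under arbitrary impulses along this switching signal. -/

import Mathlib

open Matrix NormedSpace
open scoped Matrix.Norms.L2Operator

noncomputable section

/-- A real square matrix is Hurwitz stable if every eigenvalue of it, regarded as a
complex matrix, has negative real part. -/
def HurwitzStable {n : ℕ} (A : Matrix (Fin n) (Fin n) ℝ) : Prop :=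
  ∀ μ ∈ spectrum ℂ (A.map (Complex.ofReal ·)), μ.re < 0

/-- A real square matrix is unstable if some eigenvalue of it, regarded as a
complex matrix, has positive real part. -/
def HasUnstableEigenvalue {n : ℕ} (A : Matrix (Fin n) (Fin n) ℝ) : Prop :=
  ∃ μ ∈ spectrum ℂ (A.map (Complex.ofReal ·)), 0 < μ.re

/-- The transition matrix `Φ_j` of the reset switched system: for the switching sequence
`p 0, p 1, …`, durations `d 1, d 2, …` and reset matrices `R`, it is
`Φ_j = R_{(p_{j−1},p_j)} exp(d_j A_{p_{j−1}}) ⋯ R_{(p_0,p_1)} exp(d_1 A_{p_0})`, `Φ_0 = 1`. -/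
def resetTransition {n : ℕ} {P : Type*} (A : P → Matrix (Fin n) (Fin n) ℝ)
    (R : P → P → Matrix (Fin n) (Fin n) ℝ) (p : ℕ → P) (d : ℕ → ℝ) :
    ℕ → Matrix (Fin n) (Fin n) ℝ
  | 0 => 1
  | j + 1 => R (p j) (p (j + 1)) * exp (d (j + 1) • A (p j)) * resetTransition A R p d j

/-- The transition matrix `Ψ_j` of the impulsive switched system: for the switching sequence
`p 0, p 1, …`, durations `d 1, d 2, …` and impulse matrices `M 1, M 2, …`, it is
`Ψ_j = M_j exp(d_j A_{p_{j−1}}) ⋯ M_1 exp(d_1 A_{p_0})`, `Ψ_0 = 1`. -/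
def impulsiveTransition {n : ℕ} {P : Type*} (A : P → Matrix (Fin n) (Fin n) ℝ)
    (M : ℕ → Matrix (Fin n) (Fin n) ℝ) (p : ℕ → P) (d : ℕ → ℝ) :
    ℕ → Matrix (Fin n) (Fin n) ℝ
  | 0 => 1
  | j + 1 => M (j + 1) * exp (d (j + 1) • A (p j)) * impulsiveTransition A M p d j

/-!
Track `Ψ_jᵀ Q_{p_j} Ψ_j` in the Loewner order. By Grönwall's inequality for
`t ↦ xᵀ exp(t A_q)ᵀ Q_q exp(t A_q) x`, flowing in mode `q` scales `Q_q` by at most `exp(-λτ)`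
over a stable interval of length `≥ τ`, by at most `exp(μη)` over an unstable interval of length
`≤ η` or over any part of an interval, and an impulse gives `M_kᵀ Q_{p_k} M_k ⪯ γ Q_{p_{k-1}}`.
Hence `Ψ_jᵀ Q_{p_j} Ψ_j ⪯ exp(E_j) Q_{p_0}` with `E_j = -λ N_s(j) τ + μ N_u(j) η + j ln γ`.
The limsup condition bounds `E_j` above, and with `r I ⪯ Q_q` and `Q_{p_0} ⪯ R I` this gives
`Tᵀ T ⪯ C² I` for `T = exp(s A_{p_j}) Ψ_j`, uniformly in the impulses.
-/

open scoped MatrixOrder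

lemma le_mul_exp_of_hasDerivAt_le {f f' : ℝ → ℝ} {c t : ℝ} (hf : ∀ s, HasDerivAt f (f' s) s)
    (hf' : ∀ s, f' s ≤ c * f s) (ht : 0 ≤ t) : f t ≤ f 0 * Real.exp (c * t) := by
  have := le_gronwallBound_of_liminf_deriv_right_le (f := f) (a := 0) (b := t) (ε := 0)
    (fun s _ => (hf s).continuousAt.continuousWithinAt)
    (fun s _ r hr => (hf s).hasDerivWithinAt.liminf_right_slope_le hr) le_rfl
    (fun s _ => by simpa using hf' s) t ⟨ht, le_rfl⟩
  simpa [gronwallBound_ε0] using this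

lemma bddAbove_range_of_limsup_lt_zero {u : ℕ → ℝ} (h : Filter.limsup u Filter.atTop < 0) :
    BddAbove (Set.range u) := by
  refine Filter.IsBoundedUnder.bddAbove_range (not_not.1 fun hu => ?_)
  -- In `ℝ`, the `limsup` of a sequence that is not bounded above is the junk value `0`.
  rw [Real.limsup_of_not_isBoundedUnder hu] at h
  exact lt_irrefl 0 h

lemma sum_range_ite_add_le {P : Type*} [DecidableEq P] (S U : Finset P) (p : ℕ → P)
    (hp : ∀ i, p i ∈ S ∨ p i ∈ U) {a b c : ℝ} (hb : 0 ≤ b) (j : ℕ) :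
    ∑ i ∈ Finset.range j, ((if p i ∈ S then a else b) + c) ≤
      (((Finset.range j).filter fun i => p i ∈ S).card : ℝ) * a +
        (((Finset.range j).filter fun i => p i ∈ U).card : ℝ) * b + j * c := by
  calc _ ≤ ∑ i ∈ Finset.range j,
        ((if p i ∈ S then a else 0) + (if p i ∈ U then b else 0) + c) := by
        refine Finset.sum_le_sum fun i _ => ?_
        have := hp i
        split_ifs <;> simp_all
    _ = _ := by
        simp only [Finset.sum_add_distrib, Finset.sum_ite, Finset.sum_const_zero,
          Finset.sum_const, nsmul_eq_mul, Finset.card_range, add_zero]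

namespace Matrix

variable {m : Type*} [Fintype m]

def quadFormCLM (x : m → ℝ) : Matrix m m ℝ →L[ℝ] ℝ :=
  LinearMap.toContinuousLinearMap
    { toFun := fun B => x ⬝ᵥ B *ᵥ x
      map_add' := fun B C => by simp [add_mulVec, dotProduct_add]
      map_smul' := fun c B => by simp [smul_mulVec, dotProduct_smul] }

@[simp]
lemma quadFormCLM_apply (x : m → ℝ) (B : Matrix m m ℝ) : quadFormCLM x B = x ⬝ᵥ B *ᵥ x := rfl

lemma quadFormCLM_mono (x : m → ℝ) {B C : Matrix m m ℝ} (h : B ≤ C) :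
    quadFormCLM x B ≤ quadFormCLM x C := by
  simpa [sub_mulVec] using (le_iff.1 h).dotProduct_mulVec_nonneg x

lemma le_of_forall_quadFormCLM_le {B C : Matrix m m ℝ} (hB : B.IsHermitian) (hC : C.IsHermitian)
    (h : ∀ x, quadFormCLM x B ≤ quadFormCLM x C) : B ≤ C :=
  le_iff.2 <| .of_dotProduct_mulVec_nonneg (hC.sub hB) fun x => by
    simpa [sub_mulVec] using h x

lemma transpose_mul_mul_le_transpose_mul_mul {B C : Matrix m m ℝ} (h : B ≤ C)
    (T : Matrix m m ℝ) : Tᵀ * B * T ≤ Tᵀ * C * T := by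
  have := star_left_conjugate_le_conjugate h T
  rwa [star_eq_conjTranspose, conjTranspose_eq_transpose_of_trivial] at this

lemma mul_transpose_mul_mul_le_smul {S T Q₀ Q₁ Q₂ : Matrix m m ℝ} {a b : ℝ} (hb : 0 ≤ b)
    (hT : Tᵀ * Q₁ * T ≤ a • Q₀) (hS : Sᵀ * Q₂ * S ≤ b • Q₁) :
    (S * T)ᵀ * Q₂ * (S * T) ≤ (b * a) • Q₀ :=
  calc (S * T)ᵀ * Q₂ * (S * T) = Tᵀ * (Sᵀ * Q₂ * S) * T := by
        simp only [transpose_mul, Matrix.mul_assoc]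
    _ ≤ Tᵀ * (b • Q₁) * T := transpose_mul_mul_le_transpose_mul_mul hS T
    _ = b • (Tᵀ * Q₁ * T) := by rw [Matrix.mul_smul, Matrix.smul_mul]
    _ ≤ b • (a • Q₀) := smul_le_smul_of_nonneg_left hT hb
    _ = (b * a) • Q₀ := smul_smul b a Q₀

variable [DecidableEq m]

lemma PosDef.exists_pos_smul_one_le {Q : Matrix m m ℝ} (hQ : Q.PosDef) :
    ∃ r > (0 : ℝ), r • (1 : Matrix m m ℝ) ≤ Q := by
  rcases subsingleton_or_nontrivial (Matrix m m ℝ) with _ | _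
  · exact ⟨1, one_pos, (Subsingleton.elim _ _).le⟩
  have h := hQ.isStrictlyPositive
  obtain ⟨r, hr, hrQ⟩ :=
    (CFC.exists_pos_algebraMap_le_iff h.isSelfAdjoint).2 fun x hx => h.spectrum_pos hx
  exact ⟨r, hr, by rwa [Algebra.algebraMap_eq_smul_one] at hrQ⟩

lemma exists_pos_smul_one_le_of_forall_posDef {ι : Type*} [Finite ι] [Nonempty ι]
    {Q : ι → Matrix m m ℝ} (hQ : ∀ i, (Q i).PosDef) :
    ∃ r > (0 : ℝ), ∀ i, r • (1 : Matrix m m ℝ) ≤ Q i := by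
  choose r hr hrQ using fun i => (hQ i).exists_pos_smul_one_le
  obtain ⟨i₀, hi₀⟩ := Finite.exists_min r
  exact ⟨r i₀, hr i₀, fun i =>
    (smul_le_smul_of_nonneg_right (hi₀ i) PosSemidef.one.nonneg).trans (hrQ i)⟩

lemma IsHermitian.exists_le_smul_one {Q : Matrix m m ℝ} (hQ : Q.IsHermitian) :
    ∃ R > (0 : ℝ), Q ≤ R • (1 : Matrix m m ℝ) := by
  obtain ⟨R, hR⟩ := (finite_real_spectrum (A := Q)).bddAbove
  refine ⟨max R 1, by positivity, ?_⟩
  rw [← Algebra.algebraMap_eq_smul_one, le_algebraMap_iff_spectrum_le hQ.isSelfAdjoint]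
  exact fun x hx => (hR hx).trans (le_max_left _ _)

lemma l2_opNorm_le_sqrt_of_transpose_mul_self_le {T : Matrix m m ℝ} {c : ℝ}
    (h : Tᵀ * T ≤ c • 1) : ‖T‖ ≤ √c := by
  have norm_sq (y : EuclideanSpace ℝ m) : ‖y‖ ^ 2 = y.ofLp ⬝ᵥ y.ofLp := by
    rw [EuclideanSpace.real_norm_sq_eq]
    simp [dotProduct, sq]
  rw [cstar_norm_def]
  refine ContinuousLinearMap.opNorm_le_bound _ (Real.sqrt_nonneg c) fun x => ?_
  rw [← Real.sqrt_sq (norm_nonneg _), ← Real.sqrt_sq (norm_nonneg x),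
    ← Real.sqrt_mul' _ (sq_nonneg _)]
  refine Real.sqrt_le_sqrt ?_
  calc ‖toEuclideanCLM (𝕜 := ℝ) T x‖ ^ 2 = quadFormCLM x.ofLp (Tᵀ * T) := by
        rw [quadFormCLM_apply, ← mulVec_mulVec, dotProduct_mulVec x.ofLp Tᵀ, vecMul_transpose,
          norm_sq, ofLp_toEuclideanCLM]
    _ ≤ quadFormCLM x.ofLp (c • 1) := quadFormCLM_mono _ h
    _ = c * ‖x‖ ^ 2 := by simp [norm_sq]

lemma l2_opNorm_le_sqrt_of_transpose_mul_mul_le {T Q : Matrix m m ℝ} {r R : ℝ} (hr : 0 < r)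
    (hQ : r • 1 ≤ Q) (h : Tᵀ * Q * T ≤ R • 1) : ‖T‖ ≤ √(R / r) := by
  refine l2_opNorm_le_sqrt_of_transpose_mul_self_le ?_
  calc Tᵀ * T = r⁻¹ • (Tᵀ * (r • 1) * T) := by
        rw [Matrix.mul_smul, Matrix.smul_mul, smul_smul, inv_mul_cancel₀ hr.ne', one_smul,
          Matrix.mul_one]
    _ ≤ r⁻¹ • (Tᵀ * Q * T) :=
        smul_le_smul_of_nonneg_left (transpose_mul_mul_le_transpose_mul_mul hQ T) (by positivity)
    _ ≤ r⁻¹ • (R • 1) := smul_le_smul_of_nonneg_left h (by positivity)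
    _ = (R / r) • 1 := by rw [smul_smul, div_eq_inv_mul]

lemma hasDerivAt_transpose_exp_smul_mul_mul_exp_smul (Q A : Matrix m m ℝ) (t : ℝ) :
    HasDerivAt (fun t : ℝ => (exp (t • A))ᵀ * Q * exp (t • A))
      ((exp (t • A))ᵀ * (Q * A + Aᵀ * Q) * exp (t • A)) t := by
  have h (s : ℝ) : (exp (s • A))ᵀ = exp (s • Aᵀ) := by rw [← transpose_smul, exp_transpose]
  simp only [h]
  refine (((hasDerivAt_exp_smul_const Aᵀ t).mul_const Q).mul
    (hasDerivAt_exp_smul_const' A t)).congr_deriv ?_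
  simp only [mul_add, add_mul, mul_assoc]
  rw [add_comm]

lemma transpose_exp_smul_mul_mul_exp_smul_le {Q A : Matrix m m ℝ} {c t : ℝ}
    (hQ : Q.IsHermitian) (hA : Q * A + Aᵀ * Q ≤ c • Q) (ht : 0 ≤ t) :
    (exp (t • A))ᵀ * Q * exp (t • A) ≤ Real.exp (c * t) • Q := by
  have hherm : ((exp (t • A))ᵀ * Q * exp (t • A)).IsHermitian := by
    simpa using isHermitian_conjTranspose_mul_mul (exp (t • A)) hQ
  refine le_of_forall_quadFormCLM_le hherm (hQ.smul (IsSelfAdjoint.all _)) fun x => ?_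
  have hderiv := fun s => (quadFormCLM x).hasFDerivAt.comp_hasDerivAt s
    (hasDerivAt_transpose_exp_smul_mul_mul_exp_smul Q A s)
  have hbound (s : ℝ) : quadFormCLM x ((exp (s • A))ᵀ * (Q * A + Aᵀ * Q) * exp (s • A))
      ≤ c * (quadFormCLM x ∘ fun s => (exp (s • A))ᵀ * Q * exp (s • A)) s := by
    rw [Function.comp_apply, ← smul_eq_mul c, ← map_smul]
    refine quadFormCLM_mono x ?_
    simpa [Matrix.mul_smul, Matrix.smul_mul] using
      transpose_mul_mul_le_transpose_mul_mul hA (exp (s • A))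
  simpa [mul_comm] using le_mul_exp_of_hasDerivAt_le hderiv hbound ht

lemma transpose_exp_smul_mul_mul_exp_smul_le_of_mul_le {Q A : Matrix m m ℝ} {c t b : ℝ}
    (hQ : Q.PosSemidef) (hA : Q * A + Aᵀ * Q ≤ c • Q) (ht : 0 ≤ t) (hb : c * t ≤ b) :
    (exp (t • A))ᵀ * Q * exp (t • A) ≤ Real.exp b • Q :=
  (transpose_exp_smul_mul_mul_exp_smul_le hQ.isHermitian hA ht).trans
    (smul_le_smul_of_nonneg_right (Real.exp_le_exp.2 hb) hQ.nonneg)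

end Matrix

lemma impulsiveTransition_transpose_mul_mul_le {n : ℕ} {P : Type*}
    {A : P → Matrix (Fin n) (Fin n) ℝ} {M : ℕ → Matrix (Fin n) (Fin n) ℝ} {p : ℕ → P}
    {d : ℕ → ℝ} {Q : ℕ → Matrix (Fin n) (Fin n) ℝ} {ρ : ℕ → ℝ} {c : ℝ}
    (hflow : ∀ k, (exp (d (k + 1) • A (p k)))ᵀ * Q k * exp (d (k + 1) • A (p k)) ≤
      Real.exp (ρ k) • Q k)
    (himpulse : ∀ k, (M (k + 1))ᵀ * Q (k + 1) * M (k + 1) ≤ Real.exp c • Q k) (j : ℕ) :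
    (impulsiveTransition A M p d j)ᵀ * Q j * impulsiveTransition A M p d j ≤
      Real.exp (∑ i ∈ Finset.range j, (ρ i + c)) • Q 0 := by
  induction j with
  | zero => simp [impulsiveTransition]
  | succ k ih =>
    rw [impulsiveTransition, Finset.sum_range_succ, add_comm _ (ρ k + c), Real.exp_add,
      Real.exp_add, mul_comm (Real.exp (ρ k))]
    exact mul_transpose_mul_mul_le_smul (by positivity) ih
      (mul_transpose_mul_mul_le_smul (Real.exp_pos _).le (hflow k) (himpulse k))

lemma norm_exp_smul_mul_impulsiveTransition_le {n : ℕ} {P : Type*}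
    {A : P → Matrix (Fin n) (Fin n) ℝ} {M : ℕ → Matrix (Fin n) (Fin n) ℝ} {p : ℕ → P}
    {d : ℕ → ℝ} {Q : ℕ → Matrix (Fin n) (Fin n) ℝ} {ρ : ℕ → ℝ} {c : ℝ} {j : ℕ} {s K B r R : ℝ}
    (hflow : ∀ k, (exp (d (k + 1) • A (p k)))ᵀ * Q k * exp (d (k + 1) • A (p k)) ≤
      Real.exp (ρ k) • Q k)
    (himpulse : ∀ k, (M (k + 1))ᵀ * Q (k + 1) * M (k + 1) ≤ Real.exp c • Q k)
    (hpartial : (exp (s • A (p j)))ᵀ * Q j * exp (s • A (p j)) ≤ K • Q j) (hK : 0 ≤ K)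
    (hB : ∑ i ∈ Finset.range j, (ρ i + c) ≤ B) (hr : 0 < r) (hrQ : r • 1 ≤ Q j)
    (hQ₀ : 0 ≤ Q 0) (hRQ : Q 0 ≤ R • 1) :
    ‖exp (s • A (p j)) * impulsiveTransition A M p d j‖ ≤ √(K * Real.exp B * R / r) := by
  refine l2_opNorm_le_sqrt_of_transpose_mul_mul_le hr hrQ ?_
  calc (exp (s • A (p j)) * impulsiveTransition A M p d j)ᵀ * Q j *
        (exp (s • A (p j)) * impulsiveTransition A M p d j)
      ≤ (K * Real.exp (∑ i ∈ Finset.range j, (ρ i + c))) • Q 0 :=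
        mul_transpose_mul_mul_le_smul hK (impulsiveTransition_transpose_mul_mul_le hflow himpulse j)
          hpartial
    _ ≤ (K * Real.exp B) • Q 0 := by
        have h : K * Real.exp (∑ i ∈ Finset.range j, (ρ i + c)) ≤ K * Real.exp B :=
          mul_le_mul_of_nonneg_left (Real.exp_le_exp.2 hB) hK
        exact smul_le_smul_of_nonneg_right h hQ₀
    _ ≤ (K * Real.exp B) • (R • 1) := smul_le_smul_of_nonneg_left hRQ (by positivity)
    _ = (K * Real.exp B * R) • 1 := smul_smul _ _ _
theorem impulsive_system_stable_of_MLF_mixed_general {n : ℕ} {P : Type*} [Fintype P] [DecidableEq P]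
    (S U : Finset P) (hSU : S ∪ U = Finset.univ)
    (A : P → Matrix (Fin n) (Fin n) ℝ)
    (𝓘 : Set (Matrix (Fin n) (Fin n) ℝ))
    (Q : P → Matrix (Fin n) (Fin n) ℝ) (hQ : ∀ p, (Q p).PosDef)
    (lamf muf : P → ℝ) (γf : P → P → ℝ)
    (hlamf : ∀ p ∈ S, 0 < lamf p) (hmuf : ∀ p ∈ U, 0 < muf p)
    (hγf : ∀ p q, 1 ≤ γf p q)
    (hQA_s : ∀ p ∈ S, ((-(lamf p)) • Q p - (Q p * A p + (A p)ᵀ * Q p)).PosSemidef)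
    (hQA_u : ∀ p ∈ U, ((muf p) • Q p - (Q p * A p + (A p)ᵀ * Q p)).PosSemidef)
    (hM : ∀ p q, ∀ M ∈ 𝓘, (γf q p • Q q - Mᵀ * Q p * M).PosSemidef)
    (lam mu γ : ℝ)
    (hlam_lb : ∀ p ∈ S, lam ≤ lamf p)
    (hmu_ub : ∀ p ∈ U, muf p ≤ mu) (hmu_mem : ∃ p ∈ U, mu = muf p)
    (hγ_ub : ∀ p q, γf p q ≤ γ)
    (τ η : ℝ) (hτ : 0 < τ) (hη : 0 < η)
    (p : ℕ → P) (d : ℕ → ℝ)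
    (hd : ∀ k, 1 ≤ k → 0 < d k)
    (hdS : ∀ k, 1 ≤ k → p (k - 1) ∈ S → τ ≤ d k)
    (hdU : ∀ k, 1 ≤ k → p (k - 1) ∈ U → d k ≤ η)
    (hlimsup : Filter.limsup (fun j : ℕ =>
        -lam * (((Finset.range j).filter fun i => p i ∈ S).card : ℝ) * τ +
          mu * (((Finset.range j).filter fun i => p i ∈ U).card : ℝ) * η +
          (j : ℝ) * Real.log γ) Filter.atTop < 0) :
    ∃ C > (0 : ℝ), ∀ M : ℕ → Matrix (Fin n) (Fin n) ℝ, (∀ k, 1 ≤ k → M k ∈ 𝓘) →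
      ∀ (j : ℕ) (s : ℝ), 0 ≤ s → s ≤ d (j + 1) →
        ‖exp (s • A (p j)) * impulsiveTransition A M p d j‖ ≤ C := by
  have hmode (q : P) : q ∈ S ∨ q ∈ U := Finset.mem_union.1 (hSU ▸ Finset.mem_univ q)
  have hmu : 0 ≤ mu := by
    obtain ⟨q, hq, rfl⟩ := hmu_mem
    exact (hmuf q hq).le
  have hγ : 0 < γ := zero_lt_one.trans_le ((hγf (p 0) (p 0)).trans (hγ_ub _ _))
  have hfull (k : ℕ) : (exp (d (k + 1) • A (p k)))ᵀ * Q (p k) * exp (d (k + 1) • A (p k)) ≤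
      Real.exp (if p k ∈ S then -(lam * τ) else mu * η) • Q (p k) := by
    have hd₀ := (hd (k + 1) le_add_self).le
    split_ifs with hS
    · refine transpose_exp_smul_mul_mul_exp_smul_le_of_mul_le (hQ _).posSemidef (hQA_s _ hS) hd₀ ?_
      nlinarith [hlamf _ hS, hlam_lb _ hS, hdS (k + 1) le_add_self hS]
    · have hU := (hmode (p k)).resolve_left hS
      refine transpose_exp_smul_mul_mul_exp_smul_le_of_mul_le (hQ _).posSemidef (hQA_u _ hU) hd₀ ?_
      nlinarith [hmuf _ hU, hmu_ub _ hU, hdU (k + 1) le_add_self hU]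
  have hpartial (j : ℕ) {s : ℝ} (hs : 0 ≤ s) (hsd : s ≤ d (j + 1)) :
      (exp (s • A (p j)))ᵀ * Q (p j) * exp (s • A (p j)) ≤ Real.exp (mu * η) • Q (p j) := by
    rcases hmode (p j) with hS | hU
    · refine transpose_exp_smul_mul_mul_exp_smul_le_of_mul_le (hQ _).posSemidef (hQA_s _ hS) hs ?_
      nlinarith [hlamf _ hS]
    · refine transpose_exp_smul_mul_mul_exp_smul_le_of_mul_le (hQ _).posSemidef (hQA_u _ hU) hs ?_
      nlinarith [hmuf _ hU, hmu_ub _ hU, hdU (j + 1) le_add_self hU]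
  have : Nonempty P := ⟨p 0⟩
  obtain ⟨r, hr, hrQ⟩ := exists_pos_smul_one_le_of_forall_posDef hQ
  obtain ⟨R, hR, hRQ⟩ := (hQ (p 0)).isHermitian.exists_le_smul_one
  obtain ⟨B, hB⟩ := bddAbove_range_of_limsup_lt_zero hlimsup
  refine ⟨√(Real.exp (mu * η) * Real.exp B * R / r), by positivity, fun M hMI j s hs hsd => ?_⟩
  have himpulse (k : ℕ) : (M (k + 1))ᵀ * Q (p (k + 1)) * M (k + 1) ≤
      Real.exp (Real.log γ) • Q (p k) := by
    rw [Real.exp_log hγ]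
    exact (le_iff.2 (hM _ _ _ (hMI (k + 1) le_add_self))).trans
      (smul_le_smul_of_nonneg_right (hγ_ub _ _) (hQ _).posSemidef.nonneg)
  exact norm_exp_smul_mul_impulsiveTransition_le (Q := fun k => Q (p k)) hfull himpulse
    (hpartial j hs hsd) (Real.exp_pos _).le (((sum_range_ite_add_le S U p (fun i => hmode (p i))
      (mul_nonneg hmu hη.le) j).trans_eq (by ring)).trans (hB ⟨j, rfl⟩))
    hr (hrQ (p j)) (hQ (p 0)).posSemidef.nonneg hRQ

/-- MLF criterion for impulsive switched systems with both stable and unstable modes and a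
compact set `𝓘` of impulses: under the Lyapunov inequalities with rates `λ_p`, `μ_p` and
impulse gains `γ_{(q,p)} ≥ 1`, and the limsup condition
`limsup_j (−λ N_s(j) τ + μ N_u(j) η + j ln γ) < 0` along a switching signal with dwell time
`τ` in stable modes and flee time `η` in unstable modes, the impulsive switched system is
stable under arbitrary impulses along this signal. -/
theorem impulsive_system_stable_of_MLF_mixed {n : ℕ} {P : Type*} [Fintype P] [DecidableEq P]
    (S U : Finset P) (hSU : S ∪ U = Finset.univ) (hdisj : Disjoint S U)
    (hS : S.Nonempty) (hU : U.Nonempty)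
    (A : P → Matrix (Fin n) (Fin n) ℝ)
    (𝓘 : Set (Matrix (Fin n) (Fin n) ℝ)) (h𝓘 : IsCompact 𝓘)
    (Q : P → Matrix (Fin n) (Fin n) ℝ) (hQ : ∀ p, (Q p).PosDef)
    (lamf muf : P → ℝ) (γf : P → P → ℝ)
    (hlamf : ∀ p ∈ S, 0 < lamf p) (hmuf : ∀ p ∈ U, 0 < muf p)
    (hγf : ∀ p q, 1 ≤ γf p q)
    (hQA_s : ∀ p ∈ S, ((-(lamf p)) • Q p - (Q p * A p + (A p)ᵀ * Q p)).PosSemidef)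
    (hQA_u : ∀ p ∈ U, ((muf p) • Q p - (Q p * A p + (A p)ᵀ * Q p)).PosSemidef)
    (hM : ∀ p q, ∀ M ∈ 𝓘, (γf q p • Q q - Mᵀ * Q p * M).PosSemidef)
    (lam mu γ : ℝ)
    (hlam_lb : ∀ p ∈ S, lam ≤ lamf p) (hlam_mem : ∃ p ∈ S, lam = lamf p)
    (hmu_ub : ∀ p ∈ U, muf p ≤ mu) (hmu_mem : ∃ p ∈ U, mu = muf p)
    (hγ_ub : ∀ p q, γf p q ≤ γ) (hγ_mem : ∃ p q, γ = γf p q)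
    (τ η : ℝ) (hτ : 0 < τ) (hη : 0 < η)
    (p : ℕ → P) (d : ℕ → ℝ)
    (hd : ∀ k, 1 ≤ k → 0 < d k)
    (hdS : ∀ k, 1 ≤ k → p (k - 1) ∈ S → τ ≤ d k)
    (hdU : ∀ k, 1 ≤ k → p (k - 1) ∈ U → d k ≤ η)
    (hlimsup : Filter.limsup (fun j : ℕ =>
        -lam * (((Finset.range j).filter fun i => p i ∈ S).card : ℝ) * τ +
          mu * (((Finset.range j).filter fun i => p i ∈ U).card : ℝ) * η +
          (j : ℝ) * Real.log γ) Filter.atTop < 0) :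
    ∃ C > (0 : ℝ), ∀ M : ℕ → Matrix (Fin n) (Fin n) ℝ, (∀ k, 1 ≤ k → M k ∈ 𝓘) →
      ∀ (j : ℕ) (s : ℝ), 0 ≤ s → s ≤ d (j + 1) →
        ‖exp (s • A (p j)) * impulsiveTransition A M p d j‖ ≤ C :=
  impulsive_system_stable_of_MLF_mixed_general S U hSU A 𝓘 Q hQ lamf muf γf hlamf hmuf hγf hQA_s
    hQA_u hM lam mu γ hlam_lb hmu_ub hmu_mem hγ_ub τ η hτ hη p d hd hdS hdU hlimsup
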